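/- arXiv:2103.00625 — 2 statements merged into one kernel-verified Lean document; each statement's English description precedes it below -/
import Mathlib

section
/- Let σ₁ > 0 and let N be a standard Gaussian random variable. There exist constants c > 0 and δ > 0, depending only on σ₁, such that for every σ₂ ≥ 0 with |σ₂ - σ₁| ≤ δ, the d₂-distance between σ₁N and σ₂N satisfies d₂(σ₁ N, σ₂ N) ≥ c |σ₁² - σ₂²|. -/
/-!
Test against `h = cos`, which is `C²` with `|h'|, |h''| ≤ 1`. The characteristic function gives
`E cos(σN) = exp(-σ²/2)`, and on `[-2σ₁², ∞)` the exponential expands distances by at least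
`exp(-2σ₁²)`. With `δ = σ₁` we have `σ₂² ≤ 4σ₁²`, so
`d₂(σ₁N, σ₂N) ≥ |exp(-σ₁²/2) - exp(-σ₂²/2)| ≥ exp(-2σ₁²)/2 · |σ₁² - σ₂²|`.
-/

open MeasureTheory ProbabilityTheory

/-- The univariate `d₂`-distance between two probability measures on `ℝ`: the
supremum of `|∫ h dμ - ∫ h dν|` over all `C²` functions `h` with Lipschitz
constant at most one and second derivative bounded in absolute value by one. -/
noncomputable def d2distReal (μ ν : Measure ℝ) : ℝ :=
  sSup {r : ℝ | ∃ h : ℝ → ℝ, ContDiff ℝ 2 h ∧ LipschitzWith 1 h ∧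
    (∀ x : ℝ, |deriv (deriv h) x| ≤ 1) ∧
    r = |(∫ x, h x ∂μ) - ∫ x, h x ∂ν|}

open scoped NNReal

lemma Real.exp_mul_abs_sub_le_abs_exp_sub {a b m : ℝ} (ha : m ≤ a) (hb : m ≤ b) :
    Real.exp m * |a - b| ≤ |Real.exp a - Real.exp b| := by
  wlog hab : a ≤ b generalizing a b
  · rw [abs_sub_comm a, abs_sub_comm (Real.exp a)]
    exact this hb ha (le_of_not_ge hab)
  have hexp : Real.exp b = Real.exp a * Real.exp (b - a) := by rw [← Real.exp_add]; ring_nf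
  have hlin : b - a + 1 ≤ Real.exp (b - a) := Real.add_one_le_exp _
  rw [abs_sub_comm a, abs_sub_comm (Real.exp a), abs_of_nonneg (sub_nonneg.2 hab),
    abs_of_nonneg (sub_nonneg.2 (Real.exp_le_exp.2 hab))]
  calc Real.exp m * (b - a) ≤ Real.exp a * (b - a) := by gcongr
    _ ≤ Real.exp a * (Real.exp (b - a) - 1) :=
        mul_le_mul_of_nonneg_left (by linarith) (Real.exp_pos a).le
    _ = Real.exp b - Real.exp a := by rw [hexp]; ring

lemma integral_cos_mul_eq_re_charFun (μ : Measure ℝ) [IsFiniteMeasure μ] (t : ℝ) :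
    ∫ x, Real.cos (t * x) ∂μ = (charFun μ t).re := by
  simp_rw [charFun_apply_real, ← Complex.ofReal_mul]
  have hint : Integrable (fun x : ℝ => Complex.exp ((t * x : ℝ) * Complex.I)) μ :=
    (integrable_const (1 : ℝ)).mono' (by fun_prop)
      (Filter.Eventually.of_forall fun x => (Complex.norm_exp_ofReal_mul_I _).le)
  rw [← RCLike.re_to_complex, ← integral_re hint]
  simp_rw [RCLike.re_to_complex, Complex.exp_ofReal_mul_I_re]

lemma integral_cos_gaussianReal (v : ℝ≥0) :
    ∫ x, Real.cos x ∂gaussianReal 0 v = Real.exp (-v / 2) := by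
  simpa [charFun_gaussianReal, Complex.exp_re, neg_div] using
    integral_cos_mul_eq_re_charFun (gaussianReal 0 v) 1

lemma LipschitzWith.integrable_of_integrable_id {μ : Measure ℝ} [IsFiniteMeasure μ]
    {h : ℝ → ℝ} {K : ℝ≥0} (hh : LipschitzWith K h) (hμ : Integrable id μ) :
    Integrable h μ :=
  ((hμ.norm.const_mul K).add (integrable_const ‖h 0‖)).mono' hh.continuous.aestronglyMeasurable
    (Filter.Eventually.of_forall fun x => by
      have := hh.norm_sub_le x 0
      rw [sub_zero] at this
      show ‖h x‖ ≤ K * ‖x‖ + ‖h 0‖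
      linarith [norm_le_insert' (h x) (h 0)])

lemma LipschitzWith.abs_integral_sub_le {μ : Measure ℝ} [IsProbabilityMeasure μ]
    {h : ℝ → ℝ} {K : ℝ≥0} (hh : LipschitzWith K h) (hμ : Integrable id μ) :
    |∫ x, h x ∂μ - h 0| ≤ K * ∫ x, |x| ∂μ := by
  have hshift : ∫ x, h x ∂μ - h 0 = ∫ x, (h x - h 0) ∂μ := by
    rw [integral_sub (hh.integrable_of_integrable_id hμ) (integrable_const _), integral_const,
      probReal_univ, one_smul]
  rw [hshift, ← integral_const_mul (K : ℝ) fun x : ℝ => |x|, ← Real.norm_eq_abs]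
  refine norm_integral_le_of_norm_le (hμ.abs.const_mul (K : ℝ))
    (Filter.Eventually.of_forall fun x => ?_)
  simpa using hh.norm_sub_le x 0

lemma le_d2distReal {μ ν : Measure ℝ} [IsProbabilityMeasure μ] [IsProbabilityMeasure ν]
    (hμ : Integrable id μ) (hν : Integrable id ν) {h : ℝ → ℝ} (hC2 : ContDiff ℝ 2 h)
    (hlip : LipschitzWith 1 h) (hh'' : ∀ x, |deriv (deriv h) x| ≤ 1) :
    |∫ x, h x ∂μ - ∫ x, h x ∂ν| ≤ d2distReal μ ν := by
  refine le_csSup ⟨(∫ x, |x| ∂μ) + ∫ x, |x| ∂ν, ?_⟩ ⟨h, hC2, hlip, hh'', rfl⟩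
  rintro r ⟨g, -, hg, -, rfl⟩
  have hgμ := hg.abs_integral_sub_le hμ
  have hgν := hg.abs_integral_sub_le hν
  rw [NNReal.coe_one, one_mul] at hgμ hgν
  calc |∫ x, g x ∂μ - ∫ x, g x ∂ν| = |(∫ x, g x ∂μ - g 0) - (∫ x, g x ∂ν - g 0)| := by
        rw [sub_sub_sub_cancel_right]
    _ ≤ _ := (abs_sub _ _).trans (add_le_add hgμ hgν)

theorem stmt_10 (σ₁ : ℝ) (hσ₁ : 0 < σ₁) :
    ∃ c > 0, ∃ δ > 0, ∀ σ₂ : ℝ, 0 ≤ σ₂ → |σ₂ - σ₁| ≤ δ →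
      c * |σ₁ ^ 2 - σ₂ ^ 2| ≤
        d2distReal (gaussianReal 0 (σ₁ ^ 2).toNNReal) (gaussianReal 0 (σ₂ ^ 2).toNNReal) := by
  refine ⟨Real.exp (-(2 * σ₁ ^ 2)) / 2, by positivity, σ₁, hσ₁, fun σ₂ _ hδ => ?_⟩
  have hσ₂ : σ₂ ^ 2 ≤ 4 * σ₁ ^ 2 := by nlinarith [abs_le.1 hδ]
  have hcos : ∀ σ : ℝ, ∫ x, Real.cos x ∂gaussianReal 0 (σ ^ 2).toNNReal = Real.exp (-σ ^ 2 / 2) :=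
    fun σ => by rw [integral_cos_gaussianReal, Real.coe_toNNReal _ (sq_nonneg σ)]
  calc Real.exp (-(2 * σ₁ ^ 2)) / 2 * |σ₁ ^ 2 - σ₂ ^ 2|
      = Real.exp (-(2 * σ₁ ^ 2)) * |-σ₁ ^ 2 / 2 - -σ₂ ^ 2 / 2| := by
        rw [show -σ₁ ^ 2 / 2 - -σ₂ ^ 2 / 2 = -(σ₁ ^ 2 - σ₂ ^ 2) / 2 by ring, abs_div, abs_neg,
          abs_two]
        ring
    _ ≤ |Real.exp (-σ₁ ^ 2 / 2) - Real.exp (-σ₂ ^ 2 / 2)| :=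
        Real.exp_mul_abs_sub_le_abs_exp_sub (by nlinarith) (by nlinarith)
    _ ≤ _ := by
        rw [← hcos, ← hcos]
        exact le_d2distReal ((memLp_id_gaussianReal 1).integrable le_rfl)
          ((memLp_id_gaussianReal 1).integrable le_rfl) Real.contDiff_cos
          Real.lipschitzWith_cos fun x => by simp [Real.deriv_cos', Real.abs_cos_le_one]
end

section
/- Let d ≥ 1 and ϱ > 0. There exist constants c > 0 and s₀ ≥ 1, depending only on d and ϱ, such that for all s ≥ s₀, s · ∫_{[0,1]^d} ∫_{ℝ^d \ [0,1]^d} 1{‖x - y‖ ≤ ϱ s^(-1/d)} dy dx ≥ c · s^(-1/d). -/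
/-!
Put `δ = ϱ s^(-1/d) / (2√d)`. If `x` lies in the unit cube with `x₀ ≥ 1 - δ`, the box
`(1, 1 + δ] × ∏_{i ≠ 0} [xᵢ, xᵢ + δ]` lies outside the cube and, its points differing from `x` by
at most `2δ` in each coordinate, inside the ball of radius `2√d δ = ϱ s^(-1/d)` around `x`. So the
inner integral is at least `δ^d` on a slab of volume `δ`, and `s δ^(d+1)` is a constant multiple
of `s^(-1/d)`.
-/

open MeasureTheory Metric Set

namespace EuclideanSpace

lemma setOf_forall_mem_eq_preimage_pi {ι : Type*} (t : ι → Set ℝ) :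
    {x : EuclideanSpace ℝ ι | ∀ i, x i ∈ t i} = WithLp.ofLp ⁻¹' univ.pi t := by
  ext x
  simp

variable {ι : Type*} [Fintype ι]

lemma measurableSet_setOf_forall_mem {t : ι → Set ℝ} (ht : ∀ i, MeasurableSet (t i)) :
    MeasurableSet {x : EuclideanSpace ℝ ι | ∀ i, x i ∈ t i} := by
  rw [setOf_forall_mem_eq_preimage_pi]
  exact (MeasurableSet.univ_pi ht).preimage (PiLp.volume_preserving_ofLp ι).measurable

lemma volume_setOf_forall_mem (t : ι → Set ℝ) :
    volume {x : EuclideanSpace ℝ ι | ∀ i, x i ∈ t i} = ∏ i, volume (t i) := by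
  rw [setOf_forall_mem_eq_preimage_pi, ← volume_pi_pi]
  exact (volume_preserving_symm_measurableEquiv_toLp ι).measure_preimage_equiv _

lemma dist_le_sqrt_card_mul {x y : EuclideanSpace ℝ ι} {a : ℝ} (ha : 0 ≤ a)
    (h : ∀ i, |x i - y i| ≤ a) : dist x y ≤ √(Fintype.card ι) * a := by
  rw [EuclideanSpace.dist_eq, ← Real.sqrt_sq ha, ← Real.sqrt_mul (Nat.cast_nonneg _)]
  gcongr
  calc ∑ i, dist (x i) (y i) ^ 2 ≤ ∑ _i : ι, a ^ 2 := by
        gcongr with i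
        exact h i
    _ = _ := by simp

end EuclideanSpace

lemma setIntegral_ite_norm_sub_le {E : Type*} [NormedAddCommGroup E] [MeasurableSpace E]
    [OpensMeasurableSpace E] (μ : Measure E) (s : Set E) (x : E) (r : ℝ) :
    ∫ y in s, (if ‖x - y‖ ≤ r then (1 : ℝ) else 0) ∂μ = μ.real (s ∩ closedBall x r) := by
  have h : (fun y => if ‖x - y‖ ≤ r then (1 : ℝ) else 0) =
      (closedBall x r).indicator fun _ => 1 := by
    ext y
    simp [indicator, mem_closedBall, dist_eq_norm, norm_sub_rev]
  rw [h, setIntegral_indicator measurableSet_closedBall, setIntegral_const, smul_eq_mul, mul_one]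

lemma integrableOn_measureReal_inter_closedBall {E : Type*} [NormedAddCommGroup E]
    [NormedSpace ℝ E] [FiniteDimensional ℝ E] [MeasurableSpace E] [BorelSpace E]
    (μ : Measure E) [μ.IsAddHaarMeasure] {s t : Set E} (hs : μ s ≠ ⊤) (ht : MeasurableSet t)
    (r : ℝ) : IntegrableOn (fun x => μ.real (t ∩ closedBall x r)) s μ := by
  have hmeas : MeasurableSet {p : E × E | p.2 ∈ t ∩ closedBall p.1 r} :=
    (ht.preimage measurable_snd).inter
      (measurableSet_le (measurable_snd.dist measurable_fst) measurable_const)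
  refine Measure.integrableOn_of_bounded hs
    (measurable_measure_prodMk_left hmeas).ennreal_toReal.aestronglyMeasurable
    (M := μ.real (closedBall 0 r)) (ae_of_all _ fun x => ?_)
  rw [Real.norm_of_nonneg measureReal_nonneg, ← Measure.addHaar_real_closedBall_center μ x r]
  exact measureReal_mono inter_subset_right measure_closedBall_lt_top.ne

def unitCube (ι : Type*) : Set (EuclideanSpace ℝ ι) := {x | ∀ i, x i ∈ Icc 0 1}

section UnitCube

variable {ι : Type*} [Fintype ι]

lemma volume_unitCube : volume (unitCube ι) = 1 := by
  rw [unitCube, EuclideanSpace.volume_setOf_forall_mem]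
  simp

variable [DecidableEq ι]

lemma pow_card_le_measureReal_compl_unitCube_inter_closedBall {δ r : ℝ} (hδ : 0 ≤ δ)
    (hr : √(Fintype.card ι) * (2 * δ) ≤ r) (i₀ : ι) {x : EuclideanSpace ℝ ι}
    (hx : x i₀ ∈ Icc (1 - δ) 1) :
    δ ^ Fintype.card ι ≤ volume.real ((unitCube ι)ᶜ ∩ closedBall x r) := by
  set B : Set (EuclideanSpace ℝ ι) :=
    {y | ∀ i, y i ∈ if i = i₀ then Ioc 1 (1 + δ) else Icc (x i) (x i + δ)}
  have hB : volume.real B = δ ^ Fintype.card ι := by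
    simp [B, measureReal_def, EuclideanSpace.volume_setOf_forall_mem, apply_ite volume,
      Real.volume_Ioc, Real.volume_Icc, hδ]
  have hBsub : B ⊆ (unitCube ι)ᶜ ∩ closedBall x r := by
    intro y hy
    refine ⟨fun hyC => ?_,
      (EuclideanSpace.dist_le_sqrt_card_mul (by positivity) fun i => ?_).trans hr⟩
    · have := hy i₀
      simp only [if_pos] at this
      exact (hyC i₀).2.not_gt this.1
    · have := hy i
      split_ifs at this with hi
      · subst hi
        rw [abs_le]
        constructor <;> linarith [this.1, this.2, hx.1, hx.2]
      · rw [abs_le]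
        constructor <;> linarith [this.1, this.2]
  rw [← hB]
  exact measureReal_mono hBsub
    (measure_inter_lt_top_of_right_ne_top measure_closedBall_lt_top.ne).ne

lemma pow_succ_le_setIntegral_measureReal_compl_unitCube_inter_closedBall {δ r : ℝ}
    (hδ₀ : 0 ≤ δ) (hδ₁ : δ ≤ 1) (hr : √(Fintype.card ι) * (2 * δ) ≤ r) (i₀ : ι) :
    δ ^ (Fintype.card ι + 1) ≤
      ∫ x in unitCube ι, volume.real ((unitCube ι)ᶜ ∩ closedBall x r) := by
  set F := fun x => volume.real ((unitCube ι)ᶜ ∩ closedBall x r)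
  set A : Set (EuclideanSpace ℝ ι) := {x | ∀ i, x i ∈ if i = i₀ then Icc (1 - δ) 1 else Icc 0 1}
  have hA : volume A = ENNReal.ofReal δ := by
    simp [A, EuclideanSpace.volume_setOf_forall_mem, apply_ite volume, Real.volume_Icc]
  have hAC : A ⊆ unitCube ι := by
    intro x hx i
    have := hx i
    split_ifs at this
    · exact ⟨by linarith [this.1], this.2⟩
    · exact this
  have hF : IntegrableOn F (unitCube ι) :=
    integrableOn_measureReal_inter_closedBall volume (by simp [volume_unitCube])
      (EuclideanSpace.measurableSet_setOf_forall_mem fun _ => measurableSet_Icc).compl _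
  calc δ ^ (Fintype.card ι + 1) = δ ^ Fintype.card ι * volume.real A := by
        rw [measureReal_def, hA, ENNReal.toReal_ofReal hδ₀, pow_succ]
    _ ≤ ∫ x in A, F x :=
        setIntegral_ge_of_const_le_real
          (EuclideanSpace.measurableSet_setOf_forall_mem fun i => by
            split_ifs <;> exact measurableSet_Icc)
          (by simp [hA])
          (fun x hx => pow_card_le_measureReal_compl_unitCube_inter_closedBall hδ₀ hr i₀
            (by simpa using hx i₀))
          (hF.mono_set hAC)
    _ ≤ ∫ x in unitCube ι, F x :=
        setIntegral_mono_set hF (ae_of_all _ fun _ => measureReal_nonneg) hAC.eventuallyLE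

end UnitCube

lemma Real.mul_rpow_neg_one_div_le_one {K s : ℝ} {d : ℕ} (hK : 0 ≤ K) (hs : 0 < s) (hd : d ≠ 0)
    (hKs : K ^ d ≤ s) : K * s ^ (-(1 / (d : ℝ))) ≤ 1 := by
  have hK_le : K ≤ s ^ (1 / (d : ℝ)) := by
    calc K = (K ^ d) ^ (1 / (d : ℝ)) := by rw [one_div, Real.pow_rpow_inv_natCast hK hd]
      _ ≤ s ^ (1 / (d : ℝ)) := by gcongr
  calc K * s ^ (-(1 / (d : ℝ))) ≤ s ^ (1 / (d : ℝ)) * s ^ (-(1 / (d : ℝ))) := by gcongr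
    _ = 1 := by rw [← Real.rpow_add hs, add_neg_cancel, Real.rpow_zero]

lemma Real.mul_rpow_neg_one_div_pow_succ {s : ℝ} {d : ℕ} (hs : 0 < s) (hd : d ≠ 0) :
    s * (s ^ (-(1 / (d : ℝ)))) ^ (d + 1) = s ^ (-(1 / (d : ℝ))) := by
  rw [← Real.rpow_natCast, ← Real.rpow_mul hs.le]
  nth_rw 1 [← Real.rpow_one s]
  rw [← Real.rpow_add hs]
  congr 1
  push_cast
  field_simp
  ring

theorem stmt_13 (d : ℕ) (hd : 1 ≤ d) (ϱ : ℝ) (hϱ : 0 < ϱ) :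
    ∃ c > 0, ∃ s₀ : ℝ, 1 ≤ s₀ ∧ ∀ s : ℝ, s₀ ≤ s →
      c * s ^ (-(1 / (d : ℝ))) ≤
        s * ∫ x in {x : EuclideanSpace ℝ (Fin d) | ∀ i, x i ∈ Set.Icc (0 : ℝ) 1},
          ∫ y in {y : EuclideanSpace ℝ (Fin d) | ∀ i, y i ∈ Set.Icc (0 : ℝ) 1}ᶜ,
            (if ‖x - y‖ ≤ ϱ * s ^ (-(1 / (d : ℝ))) then (1 : ℝ) else 0) := by
  have hd₀ : d ≠ 0 := by omega
  set K := ϱ / (2 * √d) with hK_def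
  have hK : 0 < K := by positivity
  refine ⟨K ^ (d + 1), by positivity, max 1 (K ^ d), le_max_left _ _, fun s hs => ?_⟩
  have hs₀ : 0 < s := one_pos.trans_le ((le_max_left _ _).trans hs)
  set t := s ^ (-(1 / (d : ℝ)))
  have hδ₁ : K * t ≤ 1 :=
    Real.mul_rpow_neg_one_div_le_one hK.le hs₀ hd₀ ((le_max_right _ _).trans hs)
  have hr : √(Fintype.card (Fin d)) * (2 * (K * t)) = ϱ * t := by
    rw [Fintype.card_fin, hK_def]
    field_simp
  calc K ^ (d + 1) * t = s * (K * t) ^ (Fintype.card (Fin d) + 1) := by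
        rw [Fintype.card_fin, mul_pow, mul_left_comm, Real.mul_rpow_neg_one_div_pow_succ hs₀ hd₀]
    _ ≤ s * ∫ x in unitCube (Fin d),
          volume.real ((unitCube (Fin d))ᶜ ∩ closedBall x (ϱ * t)) := by
        gcongr
        exact pow_succ_le_setIntegral_measureReal_compl_unitCube_inter_closedBall
          (by positivity) hδ₁ hr.le ⟨0, hd⟩
    _ = _ := by
        simp only [setIntegral_ite_norm_sub_le]
        rfl
end
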